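/- Let G be a graph such that M = M[IAS(G)] is 3-connected (τ(M) ≥ 3), with ground set W = W(G), and let S be an ordinary 3-separation of M. Then S is sequential if and only if |S| = 3 or |W−S| = 3. -/

import Mathlib

open scoped ENat

variable {V : Type*} [Fintype V] [DecidableEq V]

/-- The column of the matrix `IAS(G) = (I | A | A+I)` indexed by `(v, i)`:
`i = 0` gives `φ(v)` (identity column), `i = 1` gives `χ(v)` (column of `A`),
`i = 2` gives `ψ(v)` (column of `A + I`). -/
def iasCol (A : Matrix V V (ZMod 2)) : V × Fin 3 → V → ZMod 2 :=
  fun p w =>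
    if p.2 = 0 then (if w = p.1 then 1 else 0)
    else if p.2 = 1 then A w p.1
    else A w p.1 + (if w = p.1 then 1 else 0)

/-- The rank of a subset of the ground set `W(G) = V × Fin 3` of the isotropic
matroid: the GF(2)-rank of the corresponding set of columns. -/
noncomputable def iasRank (A : Matrix V V (ZMod 2)) (S : Set (V × Fin 3)) : ℕ :=
  Module.finrank (ZMod 2) (Submodule.span (ZMod 2) (iasCol A '' S))

/-- The connectivity function `λ(S) = r(S) + r(W - S) - r(M)`. -/
noncomputable def iasLambda (A : Matrix V V (ZMod 2)) (S : Set (V × Fin 3)) : ℕ :=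
  iasRank A S + iasRank A Sᶜ - iasRank A Set.univ

/-- Independence in the isotropic matroid. -/
def iasIndep (A : Matrix V V (ZMod 2)) (S : Set (V × Fin 3)) : Prop :=
  LinearIndependent (ZMod 2) (fun s : S => iasCol A s.1)

/-- Circuits of the isotropic matroid: minimal dependent sets. -/
def iasCircuit (A : Matrix V V (ZMod 2)) (C : Set (V × Fin 3)) : Prop :=
  ¬ iasIndep A C ∧ ∀ S ⊂ C, iasIndep A S

/-- An ordinary `k`-separation: `λ(S) < k` and `|S|, |W - S| ≥ k`. -/
def OrdinarySep (A : Matrix V V (ZMod 2)) (k : ℕ) (S : Set (V × Fin 3)) : Prop :=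
  0 < k ∧ iasLambda A S < k ∧ k ≤ S.ncard ∧ k ≤ Sᶜ.ncard

/-- A cyclic `k`-separation: `λ(S) < k` and both `S` and `W - S` are dependent. -/
def CyclicSep (A : Matrix V V (ZMod 2)) (k : ℕ) (S : Set (V × Fin 3)) : Prop :=
  0 < k ∧ iasLambda A S < k ∧ ¬ iasIndep A S ∧ ¬ iasIndep A Sᶜ

/-- A vertical `k`-separation: `λ(S) < k` and `r(S), r(W - S) ≥ k`. -/
def VerticalSep (A : Matrix V V (ZMod 2)) (k : ℕ) (S : Set (V × Fin 3)) : Prop :=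
  0 < k ∧ iasLambda A S < k ∧ k ≤ iasRank A S ∧ k ≤ iasRank A Sᶜ

/-- `τ(M) = min {k : M has an ordinary k-separation}`, with `min ∅ = ∞`. -/
noncomputable def iasTau (A : Matrix V V (ZMod 2)) : ℕ∞ :=
  sInf {k : ℕ∞ | ∃ m : ℕ, (m : ℕ∞) = k ∧ ∃ S, OrdinarySep A m S}

/-- `κ*(M) = min ({k : M has a cyclic k-separation} ∪ {|W| - r(M)})`. -/
noncomputable def iasKappaStar (A : Matrix V V (ZMod 2)) : ℕ :=
  sInf ({k : ℕ | ∃ S, CyclicSep A k S} ∪ {3 * Fintype.card V - iasRank A Set.univ})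

/-- `κ(M) = min ({k : M has a vertical k-separation} ∪ {r(M)})`. -/
noncomputable def iasKappa (A : Matrix V V (ZMod 2)) : ℕ :=
  sInf ({k : ℕ | ∃ S, VerticalSep A k S} ∪ {iasRank A Set.univ})

/-- The simple graph underlying a looped simple graph given by its adjacency matrix. -/
def toSimpleGraph (A : Matrix V V (ZMod 2)) : SimpleGraph V where
  Adj v w := v ≠ w ∧ A v w = 1 ∧ A w v = 1
  symm := ⟨fun v w ⟨h1, h2, h3⟩ => ⟨Ne.symm h1, h3, h2⟩⟩
  loopless := ⟨fun v h => h.1 rfl⟩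

/-- The open neighborhood `N_G(v)`. -/
def nbhd (A : Matrix V V (ZMod 2)) (v : V) : Set V := {u | u ≠ v ∧ A v u = 1}

/-- `v` is a pendant vertex: `N_G(v) = {w}` for some `w`. -/
def IsPendant (A : Matrix V V (ZMod 2)) (v : V) : Prop := ∃ w, nbhd A v = {w}

/-- `G` has a pair of twin vertices: `v ≠ w` with `N_G(v) - {w} = N_G(w) - {v}`. -/
def HasTwins (A : Matrix V V (ZMod 2)) : Prop :=
  ∃ v w, v ≠ w ∧ nbhd A v \ {w} = nbhd A w \ {v}

/-- The cut-rank `c_G(X)`: the GF(2)-rank of the submatrix `A[V - X, X]`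
(columns indexed by `X`, rows indexed by `V - X`). -/
noncomputable def cutRank (A : Matrix V V (ZMod 2)) (X : Set V) : ℕ :=
  Module.finrank (ZMod 2)
    (Submodule.span (ZMod 2) ((fun x : V => fun w : ↥(Xᶜ) => A w.1 x) '' X))

/-- `τ_G(X) = ⋃_{x ∈ X} τ_G(x)`, the union of the vertex triples of members of `X`. -/
def tauSet (X : Set V) : Set (V × Fin 3) := {p | p.1 ∈ X}

/-- Loop complementation at `v`. -/
def loopComp (A : Matrix V V (ZMod 2)) (v : V) : Matrix V V (ZMod 2) :=
  fun x y => A x y + if x = v ∧ y = v then 1 else 0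

/-- Simple local complementation at `v`. -/
def simpleLocalComp (A : Matrix V V (ZMod 2)) (v : V) : Matrix V V (ZMod 2) :=
  fun x y => A x y +
    if x ≠ y ∧ (x ≠ v ∧ A v x = 1) ∧ (y ≠ v ∧ A v y = 1) then 1 else 0

/-- Non-simple local complementation at `v`. -/
def nonSimpleLocalComp (A : Matrix V V (ZMod 2)) (v : V) : Matrix V V (ZMod 2) :=
  fun x y => simpleLocalComp A v x y + if x = y ∧ x ≠ v ∧ A v x = 1 then 1 else 0

/-- One local move. -/
def LocalStep (A B : Matrix V V (ZMod 2)) : Prop :=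
  ∃ v, B = loopComp A v ∨ B = simpleLocalComp A v ∨ B = nonSimpleLocalComp A v

/-- Local equivalence: a finite sequence of loop complementations and
(simple or non-simple) local complementations. -/
def LocallyEquiv (A B : Matrix V V (ZMod 2)) : Prop :=
  Relation.ReflTransGen LocalStep A B

/-- `G` has a split: a bipartition `(V₁, V₂)` of `V` with `|V₁|, |V₂| ≥ 2` such that the
GF(2)-rank of `A[V₁, V₂]` is at most 1. -/
def HasSplit (A : Matrix V V (ZMod 2)) : Prop :=
  ∃ X : Set V, 2 ≤ X.ncard ∧ 2 ≤ Xᶜ.ncard ∧ cutRank A X ≤ 1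

/-- A transverse circuit: a circuit of the isotropic matroid meeting each
vertex triple at most once. -/
def IsTransverseCircuit (A : Matrix V V (ZMod 2)) (C : Set (V × Fin 3)) : Prop :=
  iasCircuit A C ∧ ∀ p ∈ C, ∀ q ∈ C, p.1 = q.1 → p = q

/-- An isotropic `k`-separation of `G`: `|X|, |V - X| ≥ k` and `c_G(X) < k`. -/
def IsotropicSep (A : Matrix V V (ZMod 2)) (k : ℕ) (X : Set V) : Prop :=
  k ≤ X.ncard ∧ k ≤ Xᶜ.ncard ∧ cutRank A X < k

/-- The isotropic connectivity `κ_B(G)`, with `min ∅ = ∞`. -/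
noncomputable def kappaB (A : Matrix V V (ZMod 2)) : ℕ∞ :=
  sInf {j : ℕ∞ | ∃ k : ℕ, (k : ℕ∞) = j ∧ ∃ X, IsotropicSep A k X}

/-- The 5-cycle `C₅`. -/
def C5mat : Matrix (Fin 5) (Fin 5) (ZMod 2) :=
  fun i j => if (i.val + 1) % 5 = j.val ∨ (j.val + 1) % 5 = i.val then 1 else 0

/-- The wheel `W₅` : a 5-cycle on `{0,…,4}` plus a hub `5` adjacent to all. -/
def W5mat : Matrix (Fin 6) (Fin 6) (ZMod 2) :=
  fun i j =>
    if (i.val = 5 ∧ j.val ≠ 5) ∨ (j.val = 5 ∧ i.val ≠ 5) then 1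
    else if i.val ≠ 5 ∧ j.val ≠ 5 ∧ ((i.val + 1) % 5 = j.val ∨ (j.val + 1) % 5 = i.val) then 1
    else 0
/-- `T` admits an ordering `s₁, …, s_m` of its elements with `λ({s₁,…,s_i}) < 3`
for every `i`. -/
def SeqOrdering (A : Matrix V V (ZMod 2)) (T : Set (V × Fin 3)) : Prop :=
  ∃ l : List (V × Fin 3), l.Nodup ∧ {x | x ∈ l} = T ∧
    ∀ i : ℕ, i ≤ l.length → iasLambda A {x | x ∈ l.take i} < 3


/-!
Each vertex triple `{φ(v), χ(v), ψ(v)}` is a circuit, and 3-connectivity rules out loops and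
parallel pairs; together with the symmetry of `A` this forces every cocircuit to have at least
four elements. Hence `λ(X) = r(X)` whenever `|X| ≤ 3`, so the first three elements `a, b, c` of a
sequential ordering form a triangle. Adding the fourth element gives a set `Y` with `r(Y) = 3`
and `λ(Y) = 2`, so `W - Y` spans a hyperplane whose cocircuit lies in `Y`. By orthogonality of
circuits and cocircuits in a binary matroid, this cocircuit misses one of `a, b, c`, so it has at
most three elements: a contradiction. Conversely, every proper prefix of an ordering of a
three-element set has at most two elements, hence connectivity at most two.
-/

open Submodule Set Module

theorem ZMod.eq_zero_or_eq_one (c : ZMod 2) : c = 0 ∨ c = 1 := by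
  decide +revert

theorem finrank_span_le_ncard {K M : Type*} [DivisionRing K] [AddCommGroup M] [Module K M]
    {s : Set M} (hs : s.Finite) : finrank K (span K s) ≤ s.ncard := by
  have := hs.fintype
  rw [ncard_eq_toFinset_card']
  exact finrank_span_le_card s

theorem ncard_setOf_mem_le_length {α : Type*} (l : List α) :
    {x | x ∈ l}.ncard ≤ l.length := by
  classical
  rw [← List.coe_toFinset, ncard_coe_finset]
  exact l.toFinset_card_le

theorem Submodule.mem_or_mem_or_add_mem_of_finrank_quotient_le_one {M : Type*} [AddCommGroup M]
    [Module (ZMod 2) M] [Module.Finite (ZMod 2) M] {H : Submodule (ZMod 2) M}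
    (hH : finrank (ZMod 2) (M ⧸ H) ≤ 1) (x y : M) : x ∈ H ∨ y ∈ H ∨ x + y ∈ H := by
  by_cases hx : x ∈ H
  · exact Or.inl hx
  have hx' : H.mkQ x ≠ 0 := by simpa using hx
  have hrank : finrank (ZMod 2) (M ⧸ H) = 1 :=
    le_antisymm hH (finrank_pos_iff_exists_ne_zero.mpr ⟨_, hx'⟩)
  obtain ⟨c, hc⟩ := (finrank_eq_one_iff_of_nonzero' _ hx').mp hrank (H.mkQ y)
  rcases c.eq_zero_or_eq_one with rfl | rfl
  · rw [zero_smul, eq_comm, ← LinearMap.mem_ker, ker_mkQ] at hc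
    exact Or.inr (Or.inl hc)
  · rw [one_smul] at hc
    refine Or.inr (Or.inr ?_)
    rw [← ker_mkQ H, LinearMap.mem_ker, map_add, ← hc, ZModModule.add_self]

section IsotropicMatroid

variable (A : Matrix V V (ZMod 2))

omit [Fintype V] in
theorem iasCol_zero (v : V) : iasCol A (v, 0) = Pi.single v 1 := by
  funext w
  simp [iasCol, Pi.single_apply]

omit [Fintype V] in
theorem iasCol_add_iasCol {v : V} {i j k : Fin 3} (hij : i ≠ j) (hik : i ≠ k) (hjk : j ≠ k) :
    iasCol A (v, i) + iasCol A (v, j) = iasCol A (v, k) := by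
  funext w
  fin_cases i <;> fin_cases j <;> fin_cases k <;> simp_all [iasCol] <;> grind

omit [Fintype V] in
theorem iasCol_mem_of_mem_of_mem {H : Submodule (ZMod 2) (V → ZMod 2)} {v : V} {i j : Fin 3}
    (hij : i ≠ j) (hi : iasCol A (v, i) ∈ H) (hj : iasCol A (v, j) ∈ H) (k : Fin 3) :
    iasCol A (v, k) ∈ H := by
  by_cases hki : k = i
  · rwa [hki]
  by_cases hkj : k = j
  · rwa [hkj]
  rw [← iasCol_add_iasCol A hij (Ne.symm hki) (Ne.symm hkj)]
  exact H.add_mem hi hj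

theorem eq_top_of_forall_iasCol_zero_mem {H : Submodule (ZMod 2) (V → ZMod 2)}
    (h : ∀ v, iasCol A (v, 0) ∈ H) : H = ⊤ := by
  rw [eq_top_iff, ← (Pi.basisFun (ZMod 2) V).span_eq, span_le]
  rintro _ ⟨v, rfl⟩
  rw [Pi.basisFun_apply, ← iasCol_zero]
  exact h v

theorem iasRank_univ : iasRank A univ = Fintype.card V := by
  rw [iasRank, eq_top_of_forall_iasCol_zero_mem A fun v =>
    subset_span (mem_image_of_mem _ (mem_univ _)), finrank_top, finrank_fintype_fun_eq_card]

theorem iasRank_le_ncard (X : Set (V × Fin 3)) : iasRank A X ≤ X.ncard :=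
  (finrank_span_le_ncard (X.toFinite.image _)).trans (ncard_image_le X.toFinite)

theorem iasRank_mono {X Y : Set (V × Fin 3)} (h : X ⊆ Y) : iasRank A X ≤ iasRank A Y :=
  finrank_mono (span_mono (image_mono h))

theorem iasRank_union_le (X Y : Set (V × Fin 3)) :
    iasRank A (X ∪ Y) ≤ iasRank A X + iasRank A Y := by
  rw [iasRank, image_union, span_union]
  exact finrank_add_le_finrank_add_finrank _ _

theorem iasRank_le_card (X : Set (V × Fin 3)) : iasRank A X ≤ Fintype.card V :=
  (iasRank_mono A (subset_univ X)).trans (iasRank_univ A).le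

theorem iasLambda_add_card (X : Set (V × Fin 3)) :
    iasLambda A X + Fintype.card V = iasRank A X + iasRank A Xᶜ := by
  have h := iasRank_union_le A X Xᶜ
  rw [union_compl_self, iasRank_univ] at h
  rw [iasLambda, iasRank_univ]
  omega

theorem iasLambda_le_iasRank (X : Set (V × Fin 3)) : iasLambda A X ≤ iasRank A X := by
  have := iasLambda_add_card A X
  have := iasRank_le_card A Xᶜ
  omega

omit [Fintype V] in
theorem iasLambda_compl (X : Set (V × Fin 3)) : iasLambda A Xᶜ = iasLambda A X := by
  rw [iasLambda, iasLambda, compl_compl, add_comm]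

omit [DecidableEq V] in
theorem ncard_add_ncard_compl_eq (X : Set (V × Fin 3)) :
    X.ncard + Xᶜ.ncard = 3 * Fintype.card V := by
  rw [ncard_add_ncard_compl, Nat.card_eq_fintype_card, Fintype.card_prod, Fintype.card_fin,
    mul_comm]

omit [Fintype V] in
theorem not_ordinarySep_of_three_le_iasTau (h3 : 3 ≤ iasTau A) {k : ℕ} (hk : k ≤ 2)
    (X : Set (V × Fin 3)) : ¬ OrdinarySep A k X := fun hX => by
  have : (3 : ℕ∞) ≤ k := h3.trans (sInf_le ⟨k, rfl, X, hX⟩)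
  norm_cast at this
  omega

theorem iasRank_eq_ncard_of_ncard_le_two (h3 : 3 ≤ iasTau A) (hn : 2 ≤ Fintype.card V)
    {X : Set (V × Fin 3)} (hX : X.ncard ≤ 2) : iasRank A X = X.ncard := by
  refine le_antisymm (iasRank_le_ncard A X) (not_lt.mp fun hlt => ?_)
  have := ncard_add_ncard_compl_eq X
  exact not_ordinarySep_of_three_le_iasTau A h3 hX X
    ⟨by omega, (iasLambda_le_iasRank A X).trans_lt hlt, le_rfl, by omega⟩

theorem iasCol_ne_zero (h3 : 3 ≤ iasTau A) (hn : 2 ≤ Fintype.card V) (x : V × Fin 3) :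
    iasCol A x ≠ 0 := fun hx => by
  have h := iasRank_eq_ncard_of_ncard_le_two A h3 hn (X := {x}) (by simp)
  rw [ncard_singleton, iasRank, image_singleton, hx, span_zero_singleton, finrank_bot] at h
  exact zero_ne_one h

theorem iasCol_injective (h3 : 3 ≤ iasTau A) (hn : 2 ≤ Fintype.card V) :
    Function.Injective (iasCol A) := fun x y hxy => by
  by_contra hne
  have h := iasRank_eq_ncard_of_ncard_le_two A h3 hn (X := {x, y}) (ncard_pair hne).le
  rw [ncard_pair hne, iasRank, image_pair, hxy, pair_eq_singleton, finrank_span_singleton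
    (iasCol_ne_zero A h3 hn y)] at h
  omega

theorem exists_adj_of_three_le_iasTau (h3 : 3 ≤ iasTau A) (hn : 2 ≤ Fintype.card V) (v : V) :
    ∃ u ≠ v, A u v = 1 := by
  by_contra! h
  have hcol : iasCol A (v, 1) = A v v • iasCol A (v, 0) := by
    funext w
    by_cases hw : w = v
    · simp [iasCol, hw]
    · simp [iasCol, hw, (A w v).eq_zero_or_eq_one.resolve_right (h w hw)]
  rcases (A v v).eq_zero_or_eq_one with h0 | h1
  · rw [h0, zero_smul] at hcol
    exact iasCol_ne_zero A h3 hn _ hcol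
  · rw [h1, one_smul] at hcol
    exact absurd (iasCol_injective A h3 hn hcol) (by simp)

omit [Fintype V] in
theorem exists_ne_iasCol_notMem {H : Submodule (ZMod 2) (V → ZMod 2)} {v : V} {i : Fin 3}
    (hi : iasCol A (v, i) ∉ H) : ∃ j ≠ i, iasCol A (v, j) ∉ H := by
  obtain ⟨j, k, hji, hki, hjk⟩ : ∃ j k : Fin 3, j ≠ i ∧ k ≠ i ∧ j ≠ k := by
    fin_cases i <;> decide
  by_contra! h
  exact hi (iasCol_mem_of_mem_of_mem A hjk (h j hji) (h k hki) i)

theorem iasCol_zero_mem_of_forall_ne_mem (hA : A.IsSymm) {H : Submodule (ZMod 2) (V → ZMod 2)}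
    {u v : V} (huv : u ≠ v) (hadj : A u v = 1) (hH : ∀ w ≠ v, ∀ i, iasCol A (w, i) ∈ H) :
    iasCol A (v, 0) ∈ H := by
  have hexpand : iasCol A (u, 1) = ∑ w, A w u • iasCol A (w, 0) := by
    funext x
    simp [iasCol, Finset.sum_apply]
  rw [← Finset.add_sum_erase _ _ (Finset.mem_univ v), hA.apply, hadj, one_smul] at hexpand
  refine (H.add_mem_iff_left (sum_mem fun w hw => H.smul_mem _ ?_)).mp (hexpand ▸ hH u huv 1)
  exact hH w (Finset.ne_of_mem_erase hw) 0

/-- Every cocircuit of `M[IAS(G)]` has at least four elements. -/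
theorem eq_top_of_ncard_iasCol_notMem_le_three (hA : A.IsSymm) (h3 : 3 ≤ iasTau A)
    (hn : 2 ≤ Fintype.card V) {H : Submodule (ZMod 2) (V → ZMod 2)}
    (hH : {x | iasCol A x ∉ H}.ncard ≤ 3) : H = ⊤ := by
  by_contra hne
  obtain ⟨v, hv⟩ : ∃ v, iasCol A (v, 0) ∉ H := by
    by_contra! h
    exact hne (eq_top_of_forall_iasCol_zero_mem A h)
  have hothers : ∀ w ≠ v, ∀ i, iasCol A (w, i) ∈ H := by
    intro w hwv i
    by_contra hw
    obtain ⟨j, hj, hvj⟩ := exists_ne_iasCol_notMem A hv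
    obtain ⟨k, hk, hwk⟩ := exists_ne_iasCol_notMem A hw
    have hsub : ({(v, 0), (v, j)} ∪ {(w, i), (w, k)} : Set (V × Fin 3)) ⊆
        {x | iasCol A x ∉ H} := by
      rintro _ ((rfl | rfl) | (rfl | rfl)) <;> assumption
    have hdisj : Disjoint ({(v, 0), (v, j)} : Set (V × Fin 3)) {(w, i), (w, k)} := by
      simp [hwv]
    have := ncard_le_ncard hsub (toFinite _)
    rw [ncard_union_eq hdisj, ncard_pair (by simp [Ne.symm hj]),
      ncard_pair (by simp [Ne.symm hk])] at this
    omega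
  obtain ⟨u, huv, hadj⟩ := exists_adj_of_three_le_iasTau A h3 hn v
  exact hv (iasCol_zero_mem_of_forall_ne_mem A hA huv hadj hothers)

omit [Fintype V] in
theorem setOf_iasCol_notMem_span_compl_subset (X : Set (V × Fin 3)) :
    {x | iasCol A x ∉ span (ZMod 2) (iasCol A '' Xᶜ)} ⊆ X := fun x hx => by
  by_contra hxX
  exact hx (subset_span (mem_image_of_mem _ hxX))

theorem iasRank_eq_card_of_ncard_iasCol_notMem_le_three (hA : A.IsSymm) (h3 : 3 ≤ iasTau A)
    (hn : 2 ≤ Fintype.card V) {X : Set (V × Fin 3)}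
    (hX : {x | iasCol A x ∉ span (ZMod 2) (iasCol A '' X)}.ncard ≤ 3) :
    iasRank A X = Fintype.card V := by
  rw [iasRank, eq_top_of_ncard_iasCol_notMem_le_three A hA h3 hn hX, finrank_top,
    finrank_fintype_fun_eq_card]

theorem iasLambda_eq_iasRank_of_ncard_le_three (hA : A.IsSymm) (h3 : 3 ≤ iasTau A)
    (hn : 2 ≤ Fintype.card V) {X : Set (V × Fin 3)} (hX : X.ncard ≤ 3) :
    iasLambda A X = iasRank A X := by
  have hcompl := iasRank_eq_card_of_ncard_iasCol_notMem_le_three A hA h3 hn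
    ((ncard_le_ncard (setOf_iasCol_notMem_span_compl_subset A X)).trans hX)
  have := iasLambda_add_card A X
  omega

theorem iasCol_eq_add_of_mem_span_pair (h3 : 3 ≤ iasTau A) (hn : 2 ≤ Fintype.card V)
    {a b x : V × Fin 3} (hax : a ≠ x) (hbx : b ≠ x)
    (hx : iasCol A x ∈ span (ZMod 2) {iasCol A a, iasCol A b}) :
    iasCol A x = iasCol A a + iasCol A b := by
  obtain ⟨c, d, hcd⟩ := mem_span_pair.mp hx
  have hinj := iasCol_injective A h3 hn
  rcases c.eq_zero_or_eq_one with rfl | rfl <;> rcases d.eq_zero_or_eq_one with rfl | rfl <;>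
    simp only [zero_smul, one_smul, zero_add, add_zero] at hcd
  · exact absurd hcd.symm (iasCol_ne_zero A h3 hn x)
  · exact absurd (hinj hcd) hbx
  · exact absurd (hinj hcd) hax
  · exact hcd.symm

theorem iasCol_eq_add_of_iasRank_le_two (h3 : 3 ≤ iasTau A) (hn : 2 ≤ Fintype.card V)
    {X : Set (V × Fin 3)} (hX : iasRank A X ≤ 2) {a b x : V × Fin 3}
    (ha : a ∈ X) (hb : b ∈ X) (hx : x ∈ X) (hab : a ≠ b) (hax : a ≠ x) (hbx : b ≠ x) :
    iasCol A x = iasCol A a + iasCol A b := by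
  refine iasCol_eq_add_of_mem_span_pair A h3 hn hax hbx ?_
  have hpair : iasRank A {a, b} = 2 :=
    (iasRank_eq_ncard_of_ncard_le_two A h3 hn (ncard_pair hab).le).trans (ncard_pair hab)
  have hspan : span (ZMod 2) (iasCol A '' {a, b}) = span (ZMod 2) (iasCol A '' X) :=
    eq_of_le_of_finrank_le (span_mono (image_mono (pair_subset ha hb))) (hX.trans hpair.ge)
  rw [← image_pair, hspan]
  exact subset_span (mem_image_of_mem _ hx)

theorem iasRank_compl_ne_pred_of_triangle_subset (hA : A.IsSymm) (h3 : 3 ≤ iasTau A)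
    (hn : 2 ≤ Fintype.card V) {Y : Set (V × Fin 3)} (hY : Y.ncard ≤ 4) {a b c : V × Fin 3}
    (ha : a ∈ Y) (hb : b ∈ Y) (hc : c ∈ Y) (habc : iasCol A c = iasCol A a + iasCol A b) :
    iasRank A Yᶜ ≠ Fintype.card V - 1 := fun hrank => by
  set H := span (ZMod 2) (iasCol A '' Yᶜ)
  have hquot : finrank (ZMod 2) ((V → ZMod 2) ⧸ H) ≤ 1 := by
    have := H.finrank_quotient_add_finrank
    rw [finrank_fintype_fun_eq_card] at this
    change _ + iasRank A Yᶜ = _ at this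
    omega
  obtain ⟨t, htY, htH⟩ : ∃ t ∈ Y, iasCol A t ∈ H := by
    rcases mem_or_mem_or_add_mem_of_finrank_quotient_le_one hquot (iasCol A a) (iasCol A b)
      with h | h | h
    exacts [⟨a, ha, h⟩, ⟨b, hb, h⟩, ⟨c, hc, habc ▸ h⟩]
  have hsub : {x | iasCol A x ∉ H} ⊆ Y \ {t} := fun x hx =>
    ⟨setOf_iasCol_notMem_span_compl_subset A Y hx, by rintro rfl; exact hx htH⟩
  have hfull := iasRank_eq_card_of_ncard_iasCol_notMem_le_three A hA h3 hn (X := Yᶜ)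
    ((ncard_le_ncard hsub (toFinite _)).trans (by rw [ncard_sdiff_singleton_of_mem htY]; omega))
  omega

theorem three_le_iasLambda_quadruple (hA : A.IsSymm) (h3 : 3 ≤ iasTau A)
    (hn : 2 ≤ Fintype.card V) {a b c d : V × Fin 3}
    (hab : a ≠ b) (hac : a ≠ c) (had : a ≠ d) (hbc : b ≠ c) (hbd : b ≠ d) (hcd : c ≠ d)
    (habc : iasLambda A {a, b, c} < 3) :
    3 ≤ iasLambda A {a, b, c, d} := by
  by_contra! habcd
  set Y : Set (V × Fin 3) := {a, b, c, d}
  have hY : Y.ncard = 4 := by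
    rw [ncard_insert_of_notMem (by simp [hab, hac, had]),
      ncard_insert_of_notMem (by simp [hbc, hbd]), ncard_pair hcd]
  have hrX : iasRank A {a, b, c} ≤ 2 := by
    rw [← iasLambda_eq_iasRank_of_ncard_le_three A hA h3 hn
      (ncard_eq_three.mpr ⟨a, b, c, hab, hac, hbc, rfl⟩).le]
    omega
  have hc := iasCol_eq_add_of_iasRank_le_two A h3 hn hrX (by simp) (by simp) (by simp) hab hac hbc
  have hrY : iasRank A Y = 3 := by
    refine le_antisymm ?_ (not_lt.mp fun hlt => hcd (iasCol_injective A h3 hn ?_))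
    · calc iasRank A Y = iasRank A ({a, b, c} ∪ {d}) := by
            congr 1
            ext x
            simp only [Y, mem_insert_iff, mem_union, mem_singleton_iff]
            tauto
        _ ≤ 2 + 1 := (iasRank_union_le A _ _).trans
            (add_le_add hrX ((iasRank_le_ncard A _).trans (ncard_singleton d).le))
    · rw [hc, iasCol_eq_add_of_iasRank_le_two A h3 hn (Nat.le_of_lt_succ hlt) (by simp [Y])
        (by simp [Y]) (by simp [Y]) hab had hbd]
  have hLY : 2 ≤ iasLambda A Y := not_lt.mp fun hlt => by
    have := ncard_add_ncard_compl_eq Y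
    exact not_ordinarySep_of_three_le_iasTau A h3 le_rfl Y ⟨two_pos, hlt, by omega, by omega⟩
  have := iasLambda_add_card A Y
  exact iasRank_compl_ne_pred_of_triangle_subset A hA h3 hn hY.le (a := a) (b := b) (c := c)
    (by simp [Y]) (by simp [Y]) (by simp [Y]) hc (by omega)

theorem SeqOrdering.ncard_le_three (hA : A.IsSymm) (h3 : 3 ≤ iasTau A)
    (hn : 2 ≤ Fintype.card V) {T : Set (V × Fin 3)} (hT : SeqOrdering A T) : T.ncard ≤ 3 := by
  obtain ⟨l, hnd, rfl, hprefix⟩ := hT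
  match l, hnd, hprefix with
  | a :: b :: c :: d :: l, hnd, hprefix =>
    simp only [List.nodup_cons, List.mem_cons, not_or] at hnd
    obtain ⟨⟨hab, hac, had, -⟩, ⟨hbc, hbd, -⟩, ⟨hcd, -⟩, -⟩ := hnd
    have h3' := hprefix 3 (by simp)
    have h4' := hprefix 4 (by simp)
    simp only [List.take_succ_cons, List.take_zero, List.mem_cons, List.not_mem_nil, or_false]
      at h3' h4'
    exact ((three_le_iasLambda_quadruple A hA h3 hn hab hac had hbc hbd hcd h3').not_gt h4').elim
  | [], _, _ | [_], _, _ | [_, _], _, _ | [_, _, _], _, _ =>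
    exact (ncard_setOf_mem_le_length _).trans (by simp)

theorem seqOrdering_of_ncard_le_three {T : Set (V × Fin 3)} (hT : T.ncard ≤ 3)
    (hL : iasLambda A T < 3) : SeqOrdering A T := by
  set l := T.toFinite.toFinset.toList
  have hlT : {x | x ∈ l} = T := by ext; simp [l]
  refine ⟨l, Finset.nodup_toList _, hlT, fun i hi => ?_⟩
  rcases hi.lt_or_eq with hi | rfl
  · calc iasLambda A {x | x ∈ l.take i} ≤ {x | x ∈ l.take i}.ncard :=
          (iasLambda_le_iasRank A _).trans (iasRank_le_ncard A _)
      _ ≤ (l.take i).length := ncard_setOf_mem_le_length _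
      _ < 3 := by
          have : l.length = T.ncard := by
            rw [Finset.length_toList, ncard_eq_toFinset_card]
          simp only [List.length_take]
          omega
  · rwa [List.take_length, hlT]

end IsotropicMatroid

theorem stmt15 (A : Matrix V V (ZMod 2)) (hA : A.IsSymm) (h3 : 3 ≤ iasTau A)
    (S : Set (V × Fin 3)) (hS : OrdinarySep A 3 S) :
    (SeqOrdering A S ∨ SeqOrdering A Sᶜ) ↔ (S.ncard = 3 ∨ Sᶜ.ncard = 3) := by
  obtain ⟨-, hL, hS3, hSc3⟩ := hS
  have hn : 2 ≤ Fintype.card V := by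
    have := ncard_add_ncard_compl_eq S
    omega
  constructor
  · rintro (h | h)
    · exact Or.inl ((h.ncard_le_three A hA h3 hn).antisymm hS3)
    · exact Or.inr ((h.ncard_le_three A hA h3 hn).antisymm hSc3)
  · rintro (h | h)
    · exact Or.inl (seqOrdering_of_ncard_le_three A h.le hL)
    · exact Or.inr (seqOrdering_of_ncard_le_three A h.le (by rwa [iasLambda_compl]))
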